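/- arXiv:2002.01268 — 2 statements merged into one kernel-verified Lean document; each statement's English description precedes it below -/
import Mathlib

section
/- Step-size summation bounds (Appendix Corollary, part (i)): Define ς := 1 + max{γ_0·a22/8, β_0·aΔ/16} and C(a) := max{ (2/a)·ς·max{1, a22/(4aΔ)}, (4/a)·ς³ }. If in addition κ ≤ a22/(4aΔ), then for every a ∈ [a22/4, 1/γ_0] and every k ∈ ℕ (empty products equal 1): Σ_{j=0}^{k−1} γ_j²·∏_{l=j+1}^{k−1}(1 − a·γ_l) ≤ C(a)·γ_k, Σ_{j=0}^{k−1} β_jγ_j·∏_{l=j+1}^{k−1}(1 − a·γ_l) ≤ C(a)·β_k, and Σ_{j=0}^{k−1} β_j²·∏_{l=j+1}^{k−1}(1 − a·γ_l) ≤ C(a)·β_k. -/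
noncomputable section

/-- `ς := 1 + max(γ₀ a22/8, β₀ aΔ/16)`. -/
def varsigma (a22 aΔ γ0 β0 : ℝ) : ℝ := 1 + max (γ0 * a22 / 8) (β0 * aΔ / 16)

/-- `C(a) := max( (2/a) ς max(1, a22/(4 aΔ)), (4/a) ς³ )`. -/
def Cseq (a22 aΔ γ0 β0 a : ℝ) : ℝ :=
  max ((2 / a) * varsigma a22 aΔ γ0 β0 * max 1 (a22 / (4 * aΔ)))
    ((4 / a) * varsigma a22 aΔ γ0 β0 ^ 3)

lemma aux_sum_bound (a : ℝ) (γ x w : ℕ → ℝ) (C : ℝ)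
    (hpn : ∀ l, 0 ≤ 1 - a * γ l)
    (h0 : 0 ≤ C * w 0)
    (hstep : ∀ k, x k + C * (w k - w (k + 1)) ≤ C * (a * γ k) * w k) :
    ∀ k, ∑ j ∈ Finset.range k, x j * ∏ l ∈ Finset.Ico (j + 1) k, (1 - a * γ l) ≤ C * w k := by
  intro k
  induction k with
  | zero => simpa using h0
  | succ k ih =>
    have hsum : ∑ j ∈ Finset.range (k + 1), x j * ∏ l ∈ Finset.Ico (j + 1) (k + 1), (1 - a * γ l)
        = (∑ j ∈ Finset.range k, x j * ∏ l ∈ Finset.Ico (j + 1) k, (1 - a * γ l)) * (1 - a * γ k)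
          + x k := by
      rw [Finset.sum_range_succ, Finset.sum_mul]
      congr 1
      · apply Finset.sum_congr rfl
        intro j hj
        have hjk : j + 1 ≤ k := Finset.mem_range.mp hj
        rw [Finset.prod_Ico_succ_top hjk]; ring
      · simp
    rw [hsum]
    have h1 := mul_le_mul_of_nonneg_right ih (hpn k)
    have h2 := hstep k
    nlinarith [h1, h2]

set_option maxHeartbeats 1000000 in
/-- **Step-size summation bounds (Appendix Corollary, part (i)).** -/
theorem stepsize_summation_bounds
    (a22 aΔ κ : ℝ) (ha22 : 0 < a22) (haΔ : 0 < aΔ) (hκpos : 0 < κ)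
    (γ β : ℕ → ℝ)
    (hγpos : ∀ k, 0 < γ k) (hβpos : ∀ k, 0 < β k)
    (hγmono : ∀ k, γ (k + 1) ≤ γ k) (hβmono : ∀ k, β (k + 1) ≤ β k)
    (hratio : ∀ k, β k / γ k ≤ κ)
    (hγrel : ∀ k, γ k / γ (k + 1) ≤ 1 + a22 / 8 * γ (k + 1))
    (hβrel : ∀ k, β k / β (k + 1) ≤ 1 + aΔ / 16 * β (k + 1))
    (hγβrel : ∀ k, γ k / γ (k + 1) ≤ 1 + aΔ / 16 * β (k + 1))
    (hκ : κ ≤ a22 / (4 * aΔ))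
    (a : ℝ) (ha1 : a22 / 4 ≤ a) (ha2 : a ≤ 1 / γ 0) (k : ℕ) :
    (∑ j ∈ Finset.range k, γ j ^ 2 * ∏ l ∈ Finset.Ico (j + 1) k, (1 - a * γ l)
        ≤ Cseq a22 aΔ (γ 0) (β 0) a * γ k) ∧
    (∑ j ∈ Finset.range k, β j * γ j * ∏ l ∈ Finset.Ico (j + 1) k, (1 - a * γ l)
        ≤ Cseq a22 aΔ (γ 0) (β 0) a * β k) ∧
    (∑ j ∈ Finset.range k, β j ^ 2 * ∏ l ∈ Finset.Ico (j + 1) k, (1 - a * γ l)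
        ≤ Cseq a22 aΔ (γ 0) (β 0) a * β k) := by
  set C := Cseq a22 aΔ (γ 0) (β 0) a with hC
  have hapos : 0 < a := lt_of_lt_of_le (by linarith) ha1
  -- monotonicity of γ down from 0
  have hγ0 : ∀ l, γ l ≤ γ 0 := by
    intro l
    induction l with
    | zero => exact le_refl _
    | succ l ih => exact le_trans (hγmono l) ih
  -- nonnegativity of the product factors
  have hpn : ∀ l, 0 ≤ 1 - a * γ l := by
    intro l
    have h1 : a * γ l ≤ a * γ 0 := mul_le_mul_of_nonneg_left (hγ0 l) hapos.le
    have h2 : a * γ 0 ≤ (1 / γ 0) * γ 0 := mul_le_mul_of_nonneg_right ha2 (hγpos 0).le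
    have h3 : (1 / γ 0) * γ 0 = 1 := one_div_mul_cancel (hγpos 0).ne'
    linarith
  -- ς ≥ 1
  have hς : (1 : ℝ) ≤ varsigma a22 aΔ (γ 0) (β 0) := by
    have : (0:ℝ) ≤ γ 0 * a22 / 8 := div_nonneg (mul_nonneg (hγpos 0).le ha22.le) (by norm_num)
    have hm : (0:ℝ) ≤ max (γ 0 * a22 / 8) (β 0 * aΔ / 16) := le_trans this (le_max_left _ _)
    unfold varsigma; linarith
  set M := a22 / (4 * aΔ) with hM
  have hMpos : 0 < M := by rw [hM]; positivity
  have hmax1 : (1:ℝ) ≤ max 1 M := le_max_left _ _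
  have hmaxM : M ≤ max 1 M := le_max_right _ _
  -- C ≥ 2/a and C ≥ 2M/a
  have hC2a : 2 / a ≤ C := by
    have : 2 / a ≤ (2 / a) * varsigma a22 aΔ (γ 0) (β 0) * max 1 M := by
      have h2a : (0:ℝ) < 2 / a := by positivity
      have hςnn : (0:ℝ) ≤ varsigma a22 aΔ (γ 0) (β 0) := by linarith
      have t1 : (2 / a) * 1 ≤ (2 / a) * varsigma a22 aΔ (γ 0) (β 0) :=
        mul_le_mul_of_nonneg_left hς h2a.le
      have t2 := mul_le_mul t1 hmax1 zero_le_one (mul_nonneg h2a.le hςnn)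
      linarith
    exact le_trans this (le_max_left _ _)
  have hC2M : 2 * M / a ≤ C := by
    have : 2 * M / a ≤ (2 / a) * varsigma a22 aΔ (γ 0) (β 0) * max 1 M := by
      have h2a : (0:ℝ) < 2 / a := by positivity
      have hςnn : (0:ℝ) ≤ varsigma a22 aΔ (γ 0) (β 0) := by linarith
      have : (2 / a) * 1 * M ≤ (2 / a) * varsigma a22 aΔ (γ 0) (β 0) * max 1 M := by
        apply mul_le_mul
        · exact mul_le_mul_of_nonneg_left hς h2a.le
        · exact hmaxM
        · exact hMpos.le
        · exact mul_nonneg h2a.le hςnn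
      calc 2 * M / a = (2 / a) * 1 * M := by ring
        _ ≤ _ := this
    exact le_trans this (le_max_left _ _)
  have hCpos : 0 < C := lt_of_lt_of_le (by positivity) hC2a
  have hCa : 2 ≤ C * a := by
    have := mul_le_mul_of_nonneg_right hC2a hapos.le
    rwa [div_mul_cancel₀] at this
    exact hapos.ne'
  have hCaM : 2 * M ≤ C * a := by
    have := mul_le_mul_of_nonneg_right hC2M hapos.le
    rwa [div_mul_cancel₀] at this
    exact hapos.ne'
  -- basic per-step difference bounds
  have hγd : ∀ l, γ l - γ (l + 1) ≤ a22 / 8 * γ l ^ 2 := by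
    intro l
    have h := mul_le_mul_of_nonneg_right (hγrel l) (hγpos (l + 1)).le
    rw [div_mul_cancel₀ _ (hγpos (l + 1)).ne'] at h
    have hsq : γ (l + 1) ^ 2 ≤ γ l ^ 2 := by
      nlinarith [hγmono l, (hγpos (l + 1)).le]
    nlinarith
  have hβd : ∀ l, β l - β (l + 1) ≤ aΔ / 16 * β l ^ 2 := by
    intro l
    have h := mul_le_mul_of_nonneg_right (hβrel l) (hβpos (l + 1)).le
    rw [div_mul_cancel₀ _ (hβpos (l + 1)).ne'] at h
    have hsq : β (l + 1) ^ 2 ≤ β l ^ 2 := by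
      nlinarith [hβmono l, (hβpos (l + 1)).le]
    nlinarith
  have hβγ : ∀ l, β l ≤ M * γ l := by
    intro l
    have h := mul_le_mul_of_nonneg_right (hratio l) (hγpos l).le
    rw [div_mul_cancel₀ _ (hγpos l).ne'] at h
    nlinarith [hγpos l]
  -- β k - β (k+1) ≤ (a/16) γ k β k
  have hβd' : ∀ l, β l - β (l + 1) ≤ a / 16 * (γ l * β l) := by
    intro l
    have h1 := hβd l
    have h2 : β l ^ 2 ≤ M * (γ l * β l) := by
      nlinarith [hβγ l, hβpos l]
    have h3 : aΔ / 16 * β l ^ 2 ≤ aΔ / 16 * (M * (γ l * β l)) := by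
      have : (0:ℝ) ≤ aΔ / 16 := by positivity
      exact mul_le_mul_of_nonneg_left h2 this
    have h4 : aΔ / 16 * (M * (γ l * β l)) = a22 / 64 * (γ l * β l) := by
      rw [hM]; field_simp; ring
    have h5 : a22 / 64 * (γ l * β l) ≤ a / 16 * (γ l * β l) := by
      have hγβ : (0:ℝ) ≤ γ l * β l := mul_nonneg (hγpos l).le (hβpos l).le
      nlinarith
    linarith
  constructor
  · -- first sum
    apply aux_sum_bound a γ (fun j => γ j ^ 2) γ C hpn (mul_nonneg hCpos.le (hγpos 0).le)
    intro l
    show γ l ^ 2 + C * (γ l - γ (l + 1)) ≤ C * (a * γ l) * γ l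
    have hd := hγd l
    have key : γ l ^ 2 + C * (a22 / 8 * γ l ^ 2) ≤ C * (a * γ l) * γ l := by
      nlinarith [mul_nonneg (mul_nonneg hCpos.le (by linarith : (0:ℝ) ≤ a - a22 / 4))
          (sq_nonneg (γ l)),
        mul_nonneg (by linarith : (0:ℝ) ≤ C * a - 2) (sq_nonneg (γ l))]
    nlinarith [mul_le_mul_of_nonneg_left hd hCpos.le]
  constructor
  · -- second sum
    apply aux_sum_bound a γ (fun j => β j * γ j) β C hpn (mul_nonneg hCpos.le (hβpos 0).le)
    intro l
    show β l * γ l + C * (β l - β (l + 1)) ≤ C * (a * γ l) * β l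
    have hd := hβd' l
    have hγβl : (0:ℝ) < γ l * β l := mul_pos (hγpos l) (hβpos l)
    have key : β l * γ l + C * (a / 16 * (γ l * β l)) ≤ C * (a * γ l) * β l := by
      nlinarith [mul_nonneg (by linarith : (0:ℝ) ≤ C * a - 2) hγβl.le]
    nlinarith [mul_le_mul_of_nonneg_left hd hCpos.le]
  · -- third sum
    apply aux_sum_bound a γ (fun j => β j ^ 2) β C hpn (mul_nonneg hCpos.le (hβpos 0).le)
    intro l
    show β l ^ 2 + C * (β l - β (l + 1)) ≤ C * (a * γ l) * β l
    have hd := hβd' l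
    have hγβl : (0:ℝ) < γ l * β l := mul_pos (hγpos l) (hβpos l)
    have hx : β l ^ 2 ≤ M * (γ l * β l) := by
      nlinarith [hβγ l, hβpos l]
    have key : M * (γ l * β l) + C * (a / 16 * (γ l * β l)) ≤ C * (a * γ l) * β l := by
      nlinarith [mul_nonneg (by linarith : (0:ℝ) ≤ C * a - 2 * M) hγβl.le,
        mul_nonneg hMpos.le hγβl.le,
        mul_nonneg (by linarith : (0:ℝ) ≤ C * a - 2) hγβl.le]
    nlinarith [mul_le_mul_of_nonneg_left hd hCpos.le]
end
end

section
/- Weighted cross-covariance inequality (Appendix Lemma, key inequality): Let m, n be positive integers, P an m×m symmetric positive definite matrix, Q an n×n symmetric positive definite matrix, and let X, Y be random vectors in ℝ^m and ℝ^n on a common probability space with E[‖X‖²] < ∞ and E[‖Y‖²] < ∞. Then ‖E[XYᵀ]‖_{Q,P} ≤ λmin(Q)⁻¹·(Tr Q)^{1/2}·(Tr P)^{1/2}·‖E[XXᵀ]‖_P^{1/2}·‖E[YYᵀ]‖_Q^{1/2}, where λmin(Q) is the smallest eigenvalue of Q. -/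
open MeasureTheory Matrix

noncomputable section

/-- The `Q`-weighted norm `‖x‖_Q = (xᵀ Q x)^{1/2}`. -/
def qNorm {n : ℕ} (Q : Matrix (Fin n) (Fin n) ℝ) (x : Fin n → ℝ) : ℝ :=
  Real.sqrt (dotProduct x (Q.mulVec x))

/-- The weighted operator norm `‖M‖_{Q,P} = max { ‖M x‖_P : ‖x‖_Q = 1 }`
(source norm `Q`, target norm `P`). -/
def qOpNorm {m n : ℕ} (P : Matrix (Fin m) (Fin m) ℝ)
    (Q : Matrix (Fin n) (Fin n) ℝ) (M : Matrix (Fin m) (Fin n) ℝ) : ℝ :=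
  sSup {c | ∃ x : Fin n → ℝ, qNorm Q x = 1 ∧ c = qNorm P (M.mulVec x)}

/-- Smallest Rayleigh quotient (for a symmetric matrix, the smallest eigenvalue). -/
def lamMin {n : ℕ} (Q : Matrix (Fin n) (Fin n) ℝ) : ℝ :=
  sInf {r | ∃ v : EuclideanSpace ℝ (Fin n), ‖v‖ = 1 ∧
    r = dotProduct (fun i => v i) (Q.mulVec fun i => v i)}

/-- The matrix `E[X Yᵀ]` of expectations of the outer product of two random vectors. -/
def covMatrix {Ω : Type} [MeasurableSpace Ω] (Pr : Measure Ω) {d e : ℕ}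
    (X : Ω → EuclideanSpace ℝ (Fin d)) (Y : Ω → EuclideanSpace ℝ (Fin e)) :
    Matrix (Fin d) (Fin e) ℝ :=
  Matrix.of fun i j => ∫ ω, X ω i * Y ω j ∂Pr

/-! For `‖x‖_Q = 1` put `u = E[XYᵀ] x`. Then `‖u‖_P² = E[(uᵀPX)(xᵀY)]`, and the Cauchy–Schwarz
inequality, first in `L²` and then for the inner product `P`, gives
`‖u‖_P ≤ E[XᵀPX]^{1/2} E[(xᵀY)²]^{1/2}`. Next, `E[XᵀPX] = tr(P E[XXᵀ]) ≤ tr P · ‖E[XXᵀ]‖_P`,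
bounding each diagonal entry by `eᵢᵀ P E[XXᵀ] eᵢ ≤ ‖E[XXᵀ]‖_P ‖eᵢ‖_P²`; and
`(xᵀY)² ≤ |x|² |Y|² ≤ λ_min(Q)⁻² YᵀQY`, because `|z|² ≤ λ_min(Q)⁻¹ zᵀQz` for every `z`. -/

section QuadraticForm

variable {k : ℕ} (M : Matrix (Fin k) (Fin k) ℝ)

theorem qNorm_nonneg (x : Fin k → ℝ) : 0 ≤ qNorm M x :=
  Real.sqrt_nonneg _

theorem qNorm_smul (c : ℝ) (x : Fin k → ℝ) : qNorm M (c • x) = |c| * qNorm M x := by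
  rw [qNorm, qNorm, mulVec_smul, dotProduct_smul, smul_dotProduct, smul_eq_mul, smul_eq_mul,
    ← mul_assoc, Real.sqrt_mul (mul_self_nonneg c), Real.sqrt_mul_self_eq_abs]

variable {M}

theorem sq_qNorm (hM : M.PosSemidef) (x : Fin k → ℝ) : qNorm M x ^ 2 = x ⬝ᵥ M *ᵥ x :=
  Real.sq_sqrt (by simpa using hM.dotProduct_mulVec_nonneg x)

theorem qNorm_pos (hM : M.PosDef) {x : Fin k → ℝ} (hx : x ≠ 0) : 0 < qNorm M x :=
  Real.sqrt_pos.2 (by simpa using hM.dotProduct_mulVec_pos hx)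

theorem abs_dotProduct_mulVec_le (hM : M.PosSemidef) (u v : Fin k → ℝ) :
    |u ⬝ᵥ M *ᵥ v| ≤ qNorm M u * qNorm M v := by
  let normed := M.toSeminormedAddCommGroup hM
  let ips := M.toInnerProductSpace hM
  have inner_eq : ∀ x y : Fin k → ℝ, inner ℝ x y = x ⬝ᵥ M *ᵥ y := fun x y => by
    change (M *ᵥ y) ⬝ᵥ star x = _
    simp [dotProduct_comm]
  have h := abs_real_inner_le_norm u v
  -- `Fin k → ℝ` already carries the sup norm, so the induced instances are passed explicitly.
  rwa [@norm_eq_sqrt_real_inner _ normed ips, @norm_eq_sqrt_real_inner _ normed ips,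
    inner_eq, inner_eq, inner_eq] at h

theorem sq_dotProduct_mulVec_le (hM : M.PosSemidef) (u v : Fin k → ℝ) :
    (u ⬝ᵥ M *ᵥ v) ^ 2 ≤ (u ⬝ᵥ M *ᵥ u) * (v ⬝ᵥ M *ᵥ v) := by
  rw [← sq_abs, ← sq_qNorm hM, ← sq_qNorm hM, ← mul_pow]
  exact pow_le_pow_left₀ (abs_nonneg _) (abs_dotProduct_mulVec_le hM u v) 2

end QuadraticForm

theorem EuclideanSpace.norm_toLp_sq {k : ℕ} (x : Fin k → ℝ) :
    ‖WithLp.toLp 2 x‖ ^ 2 = x ⬝ᵥ x := by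
  rw [← real_inner_self_eq_norm_sq, EuclideanSpace.inner_toLp_toLp]
  simp

section LamMin

variable {k : ℕ} {Q : Matrix (Fin k) (Fin k) ℝ}

theorem lamMin_le (hQ : Q.PosSemidef) {v : EuclideanSpace ℝ (Fin k)} (hv : ‖v‖ = 1) :
    lamMin Q ≤ v.ofLp ⬝ᵥ Q *ᵥ v.ofLp :=
  csInf_le ⟨0, by rintro _ ⟨w, -, rfl⟩; simpa using hQ.dotProduct_mulVec_nonneg w.ofLp⟩ ⟨v, hv, rfl⟩

theorem lamMin_mul_dotProduct_self_le (hQ : Q.PosSemidef) (x : Fin k → ℝ) :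
    lamMin Q * (x ⬝ᵥ x) ≤ x ⬝ᵥ Q *ᵥ x := by
  rcases eq_or_ne x 0 with rfl | hx
  · simp
  set w := WithLp.toLp 2 x
  have hw : w ≠ 0 := by simpa [w] using hx
  have hle := lamMin_le hQ (norm_smul_inv_norm (𝕜 := ℝ) hw)
  simp only [RCLike.ofReal_real_eq_id, id, WithLp.ofLp_smul, mulVec_smul, dotProduct_smul,
    smul_dotProduct, smul_eq_mul, ← mul_assoc, ← sq, w] at hle
  rw [inv_pow, le_inv_mul_iff₀ (pow_pos (norm_pos_iff.2 hw) 2)] at hle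
  rwa [← EuclideanSpace.norm_toLp_sq, mul_comm]

theorem lamMin_pos (hk : 0 < k) (hQ : Q.PosDef) : 0 < lamMin Q := by
  have : Nonempty (Fin k) := ⟨⟨0, hk⟩⟩
  set f : EuclideanSpace ℝ (Fin k) → ℝ := fun v => v.ofLp ⬝ᵥ Q *ᵥ v.ofLp
  have hset : {r | ∃ v : EuclideanSpace ℝ (Fin k), ‖v‖ = 1 ∧ r = f v} = f '' Metric.sphere 0 1 := by
    ext r; simp [eq_comm]
  have hcompact : IsCompact (f '' Metric.sphere 0 1) :=
    (isCompact_sphere 0 1).image (by fun_prop)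
  obtain ⟨v, hv, hmin⟩ := hcompact.sInf_mem ((NormedSpace.sphere_nonempty.2 zero_le_one).image f)
  rw [lamMin, hset, ← hmin]
  have hv0 : v ≠ 0 := by rintro rfl; simp at hv
  simpa [f] using hQ.dotProduct_mulVec_pos (x := v.ofLp) (by simpa using hv0)

theorem dotProduct_self_le_inv_lamMin_mul (hk : 0 < k) (hQ : Q.PosDef) (x : Fin k → ℝ) :
    x ⬝ᵥ x ≤ (lamMin Q)⁻¹ * (x ⬝ᵥ Q *ᵥ x) :=
  (le_inv_mul_iff₀ (lamMin_pos hk hQ)).2 (lamMin_mul_dotProduct_self_le hQ.posSemidef x)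

theorem dotProduct_self_le_of_qNorm_eq_one (hk : 0 < k) (hQ : Q.PosDef) {x : Fin k → ℝ}
    (hx : qNorm Q x = 1) : x ⬝ᵥ x ≤ (lamMin Q)⁻¹ := by
  simpa [← sq_qNorm hQ.posSemidef, hx] using dotProduct_self_le_inv_lamMin_mul hk hQ x

theorem sq_dotProduct_le_of_qNorm_eq_one (hk : 0 < k) (hQ : Q.PosDef) {x : Fin k → ℝ}
    (hx : qNorm Q x = 1) (y : Fin k → ℝ) :
    (x ⬝ᵥ y) ^ 2 ≤ (lamMin Q)⁻¹ ^ 2 * (y ⬝ᵥ Q *ᵥ y) := by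
  calc (x ⬝ᵥ y) ^ 2 ≤ (x ⬝ᵥ x) * (y ⬝ᵥ y) := by
        simpa using sq_dotProduct_mulVec_le PosSemidef.one x y
    _ ≤ (lamMin Q)⁻¹ * ((lamMin Q)⁻¹ * (y ⬝ᵥ Q *ᵥ y)) :=
        mul_le_mul (dotProduct_self_le_of_qNorm_eq_one hk hQ hx)
          (dotProduct_self_le_inv_lamMin_mul hk hQ y) (dotProduct_self_star_nonneg y)
          (inv_nonneg.2 (lamMin_pos hk hQ).le)
    _ = (lamMin Q)⁻¹ ^ 2 * (y ⬝ᵥ Q *ᵥ y) := by ring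

end LamMin

section OpNorm

variable {m n : ℕ} (P : Matrix (Fin m) (Fin m) ℝ) {Q : Matrix (Fin n) (Fin n) ℝ}

theorem qOpNorm_le {M : Matrix (Fin m) (Fin n) ℝ} {c : ℝ} (hc : 0 ≤ c)
    (h : ∀ x, qNorm Q x = 1 → qNorm P (M *ᵥ x) ≤ c) : qOpNorm P Q M ≤ c :=
  Real.sSup_le (by rintro _ ⟨x, hx, rfl⟩; exact h x hx) hc

/-- The `Q`-unit sphere lies in a Euclidean ball of radius `λ_min(Q)^{-1/2}`, which is compact. -/
theorem bddAbove_qNorm_mulVec (hn : 0 < n) (hQ : Q.PosDef) (M : Matrix (Fin m) (Fin n) ℝ) :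
    BddAbove {c | ∃ x, qNorm Q x = 1 ∧ c = qNorm P (M *ᵥ x)} := by
  set g : EuclideanSpace ℝ (Fin n) → ℝ := fun v => qNorm P (M *ᵥ v.ofLp)
  have hg : Continuous g := by unfold g qNorm; fun_prop
  refine ((isCompact_closedBall 0 √(lamMin Q)⁻¹).image hg).bddAbove.mono ?_
  rintro _ ⟨x, hx, rfl⟩
  refine ⟨WithLp.toLp 2 x, ?_, rfl⟩
  rw [mem_closedBall_zero_iff, Real.le_sqrt (norm_nonneg _) (inv_nonneg.2 (lamMin_pos hn hQ).le),
    EuclideanSpace.norm_toLp_sq]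
  exact dotProduct_self_le_of_qNorm_eq_one hn hQ hx

theorem qNorm_mulVec_le (hn : 0 < n) (hQ : Q.PosDef) (M : Matrix (Fin m) (Fin n) ℝ)
    (v : Fin n → ℝ) : qNorm P (M *ᵥ v) ≤ qOpNorm P Q M * qNorm Q v := by
  rcases eq_or_ne v 0 with rfl | hv
  · simp [qNorm]
  have hc := qNorm_pos hQ hv
  have hunit : qNorm Q ((qNorm Q v)⁻¹ • v) = 1 := by
    rw [qNorm_smul, abs_of_pos (inv_pos.2 hc), inv_mul_cancel₀ hc.ne']
  have hle := le_csSup (bddAbove_qNorm_mulVec P hn hQ M) ⟨_, hunit, rfl⟩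
  rw [mulVec_smul, qNorm_smul, abs_of_pos (inv_pos.2 hc), inv_mul_le_iff₀ hc, mul_comm] at hle
  exact hle

theorem trace_mul_le_trace_mul_qOpNorm (hP : P.PosDef) (A : Matrix (Fin m) (Fin m) ℝ) :
    trace (P * A) ≤ trace P * qOpNorm P P A := by
  classical
  rw [trace, trace, Finset.sum_mul]
  refine Finset.sum_le_sum fun i _ => ?_
  have hdiag : ∀ B : Matrix (Fin m) (Fin m) ℝ, B i i = Pi.single i 1 ⬝ᵥ B *ᵥ Pi.single i 1 := by
    intro B; simp
  calc (P * A).diag i = Pi.single i 1 ⬝ᵥ P *ᵥ (A *ᵥ Pi.single i 1) := by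
        rw [diag_apply, hdiag (P * A), mulVec_mulVec]
    _ ≤ qNorm P (Pi.single i 1) * qNorm P (A *ᵥ Pi.single i 1) :=
        (le_abs_self _).trans (abs_dotProduct_mulVec_le hP.posSemidef _ _)
    _ ≤ qNorm P (Pi.single i 1) * (qOpNorm P P A * qNorm P (Pi.single i 1)) :=
        mul_le_mul_of_nonneg_left (qNorm_mulVec_le P i.pos hP A _) (qNorm_nonneg _ _)
    _ = P.diag i * qOpNorm P P A := by
        rw [mul_left_comm, ← sq, sq_qNorm hP.posSemidef, ← hdiag P, diag_apply, mul_comm]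

end OpNorm

section RandomVector

variable {Ω : Type} [MeasurableSpace Ω] {μ : Measure Ω} {d e : ℕ}
  {X : Ω → EuclideanSpace ℝ (Fin d)} {Y : Ω → EuclideanSpace ℝ (Fin e)}

theorem MeasureTheory.MemLp.integrable_fun_mul {p q : ENNReal} [ENNReal.HolderTriple p q 1]
    {f g : Ω → ℝ} (hf : MemLp f p μ) (hg : MemLp g q μ) : Integrable (fun ω => f ω * g ω) μ :=
  hf.integrable_mul hg

theorem integral_mul_le_sqrt_mul_sqrt {f g : Ω → ℝ} (hf : MemLp f 2 μ) (hg : MemLp g 2 μ) :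
    ∫ ω, f ω * g ω ∂μ ≤ √(∫ ω, f ω ^ 2 ∂μ) * √(∫ ω, g ω ^ 2 ∂μ) := by
  have two : ENNReal.ofReal 2 = 2 := by norm_num
  have holder := integral_mul_le_Lp_mul_Lq_of_nonneg Real.HolderConjugate.two_two
    (Filter.Eventually.of_forall fun ω => abs_nonneg (f ω))
    (Filter.Eventually.of_forall fun ω => abs_nonneg (g ω)) (two ▸ hf.abs) (two ▸ hg.abs)
  simp only [Real.rpow_two, sq_abs, ← Real.sqrt_eq_rpow] at holder
  refine le_trans (integral_mono (hf.integrable_fun_mul hg) (hf.abs.integrable_fun_mul hg.abs)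
    fun ω => ?_) holder
  exact (le_abs_self _).trans_eq (abs_mul _ _)

theorem MeasureTheory.MemLp.dotProduct_ofLp (hX : MemLp X 2 μ) (w : Fin d → ℝ) :
    MemLp (fun ω => w ⬝ᵥ (X ω).ofLp) 2 μ := by
  simpa [EuclideanSpace.inner_eq_star_dotProduct, dotProduct_comm]
    using hX.const_inner (𝕜 := ℝ) (WithLp.toLp 2 w)

theorem MeasureTheory.MemLp.ofLp_apply (hX : MemLp X 2 μ) (i : Fin d) :
    MemLp (fun ω => (X ω).ofLp i) 2 μ :=
  (EuclideanSpace.proj (𝕜 := ℝ) i).comp_memLp' hX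

theorem integrable_quadForm (hX : MemLp X 2 μ) (R : Matrix (Fin d) (Fin d) ℝ) :
    Integrable (fun ω => (X ω).ofLp ⬝ᵥ R *ᵥ (X ω).ofLp) μ :=
  integrable_finsetSum _ fun i _ => (hX.ofLp_apply i).integrable_fun_mul (hX.dotProduct_ofLp (R i))

theorem dotProduct_integral {ι : Type*} [Fintype ι] {F : Ω → ι → ℝ}
    (hF : ∀ i, Integrable (fun ω => F ω i) μ) (w : ι → ℝ) :
    w ⬝ᵥ (fun i => ∫ ω, F ω i ∂μ) = ∫ ω, w ⬝ᵥ F ω ∂μ := by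
  simp only [dotProduct, ← integral_const_mul]
  exact (integral_finsetSum _ fun i _ => (hF i).const_mul (w i)).symm

theorem covMatrix_mulVec (hX : MemLp X 2 μ) (hY : MemLp Y 2 μ) (x : Fin e → ℝ) :
    covMatrix μ X Y *ᵥ x = fun i => ∫ ω, (X ω).ofLp i * (x ⬝ᵥ (Y ω).ofLp) ∂μ := by
  ext i
  simp only [mulVec, covMatrix, of_apply]
  rw [dotProduct_comm, dotProduct_integral (F := fun ω j => (X ω).ofLp i * (Y ω).ofLp j)
    fun j => (hX.ofLp_apply i).integrable_fun_mul (hY.ofLp_apply j)]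
  simp only [dotProduct, Finset.mul_sum]
  exact integral_congr_ae (Filter.Eventually.of_forall fun ω => by simp only [mul_left_comm])

theorem dotProduct_covMatrix_mulVec (hX : MemLp X 2 μ) (hY : MemLp Y 2 μ) (w : Fin d → ℝ)
    (x : Fin e → ℝ) :
    w ⬝ᵥ covMatrix μ X Y *ᵥ x = ∫ ω, (w ⬝ᵥ (X ω).ofLp) * (x ⬝ᵥ (Y ω).ofLp) ∂μ := by
  rw [covMatrix_mulVec hX hY, dotProduct_integral (F := fun ω i => (X ω).ofLp i * (x ⬝ᵥ (Y ω).ofLp))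
    fun i => (hX.ofLp_apply i).integrable_fun_mul (hY.dotProduct_ofLp x)]
  simp only [dotProduct, Finset.sum_mul, mul_assoc]

theorem integral_quadForm_eq_trace_mul_covMatrix (hX : MemLp X 2 μ)
    (R : Matrix (Fin d) (Fin d) ℝ) :
    ∫ ω, (X ω).ofLp ⬝ᵥ R *ᵥ (X ω).ofLp ∂μ = trace (R * covMatrix μ X X) := by
  have hdiag : ∀ i, (R * covMatrix μ X X) i i = ∫ ω, (R i ⬝ᵥ (X ω).ofLp) * (X ω).ofLp i ∂μ := by
    intro i
    simp only [mul_apply, covMatrix, of_apply, ← integral_const_mul]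
    rw [← integral_finsetSum _ fun k _ =>
      ((hX.ofLp_apply k).integrable_fun_mul (hX.ofLp_apply i)).const_mul (R i k)]
    simp only [dotProduct, Finset.sum_mul, mul_assoc]
  simp only [trace, diag, hdiag]
  rw [← integral_finsetSum _ fun i _ =>
    (hX.dotProduct_ofLp (R i)).integrable_fun_mul (hX.ofLp_apply i)]
  simp only [dotProduct, mulVec, mul_comm]

theorem integral_quadForm_le_trace_mul_qOpNorm (hX : MemLp X 2 μ) {R : Matrix (Fin d) (Fin d) ℝ}
    (hR : R.PosDef) :
    ∫ ω, (X ω).ofLp ⬝ᵥ R *ᵥ (X ω).ofLp ∂μ ≤ trace R * qOpNorm R R (covMatrix μ X X) :=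
  (integral_quadForm_eq_trace_mul_covMatrix hX R).trans_le (trace_mul_le_trace_mul_qOpNorm R hR _)

theorem integral_sq_dotProduct_le (he : 0 < e) {Q : Matrix (Fin e) (Fin e) ℝ} (hQ : Q.PosDef)
    (hY : MemLp Y 2 μ) {x : Fin e → ℝ} (hx : qNorm Q x = 1) :
    ∫ ω, (x ⬝ᵥ (Y ω).ofLp) ^ 2 ∂μ ≤ (lamMin Q)⁻¹ ^ 2 * ∫ ω, (Y ω).ofLp ⬝ᵥ Q *ᵥ (Y ω).ofLp ∂μ := by
  rw [← integral_const_mul]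
  exact integral_mono (hY.dotProduct_ofLp x).integrable_sq ((integrable_quadForm hY Q).const_mul _)
    fun ω => sq_dotProduct_le_of_qNorm_eq_one he hQ hx _

theorem qNorm_covMatrix_mulVec_le {P : Matrix (Fin d) (Fin d) ℝ} (hP : P.PosSemidef)
    (hX : MemLp X 2 μ) (hY : MemLp Y 2 μ) (x : Fin e → ℝ) :
    qNorm P (covMatrix μ X Y *ᵥ x) ≤
      √(∫ ω, (X ω).ofLp ⬝ᵥ P *ᵥ (X ω).ofLp ∂μ) * √(∫ ω, (x ⬝ᵥ (Y ω).ofLp) ^ 2 ∂μ) := by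
  set u := covMatrix μ X Y *ᵥ x
  set a := √(∫ ω, (X ω).ofLp ⬝ᵥ P *ᵥ (X ω).ofLp ∂μ)
  set b := √(∫ ω, (x ⬝ᵥ (Y ω).ofLp) ^ 2 ∂μ)
  have hPX : ∫ ω, (u ᵥ* P ⬝ᵥ (X ω).ofLp) ^ 2 ∂μ ≤
      qNorm P u ^ 2 * ∫ ω, (X ω).ofLp ⬝ᵥ P *ᵥ (X ω).ofLp ∂μ := by
    rw [← integral_const_mul]
    refine integral_mono (hX.dotProduct_ofLp _).integrable_sq
      ((integrable_quadForm hX P).const_mul _) fun ω => ?_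
    rw [← dotProduct_mulVec, sq_qNorm hP]
    exact sq_dotProduct_mulVec_le hP _ _
  have hsq : qNorm P u ^ 2 ≤ qNorm P u * a * b := calc
    qNorm P u ^ 2 = ∫ ω, (u ᵥ* P ⬝ᵥ (X ω).ofLp) * (x ⬝ᵥ (Y ω).ofLp) ∂μ := by
      rw [sq_qNorm hP, dotProduct_mulVec]
      exact dotProduct_covMatrix_mulVec hX hY _ x
    _ ≤ √(∫ ω, (u ᵥ* P ⬝ᵥ (X ω).ofLp) ^ 2 ∂μ) * b :=
      integral_mul_le_sqrt_mul_sqrt (hX.dotProduct_ofLp _) (hY.dotProduct_ofLp x)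
    _ ≤ qNorm P u * a * b := by
      gcongr
      calc _ ≤ √(qNorm P u ^ 2 * ∫ ω, (X ω).ofLp ⬝ᵥ P *ᵥ (X ω).ofLp ∂μ) := Real.sqrt_le_sqrt hPX
        _ = qNorm P u * a := by rw [Real.sqrt_mul (sq_nonneg _), Real.sqrt_sq (qNorm_nonneg P u)]
  have hu := qNorm_nonneg P u
  have hab : 0 ≤ a * b := by positivity
  nlinarith

end RandomVector

theorem weighted_cross_covariance_inequality_general
    (m n : ℕ) (hn : 0 < n)
    (P : Matrix (Fin m) (Fin m) ℝ) (Q : Matrix (Fin n) (Fin n) ℝ)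
    (hP : P.PosDef) (hQ : Q.PosDef)
    {Ω : Type} [MeasurableSpace Ω] (Pr : Measure Ω)
    (X : Ω → EuclideanSpace ℝ (Fin m)) (Y : Ω → EuclideanSpace ℝ (Fin n))
    (hX : MemLp X 2 Pr) (hY : MemLp Y 2 Pr) :
    qOpNorm P Q (covMatrix Pr X Y) ≤
      (lamMin Q)⁻¹ * Real.sqrt (Matrix.trace Q) * Real.sqrt (Matrix.trace P) *
        Real.sqrt (qOpNorm P P (covMatrix Pr X X)) *
        Real.sqrt (qOpNorm Q Q (covMatrix Pr Y Y)) := by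
  have hlam : 0 ≤ (lamMin Q)⁻¹ := inv_nonneg.2 (lamMin_pos hn hQ).le
  calc qOpNorm P Q (covMatrix Pr X Y)
      ≤ √(trace P * qOpNorm P P (covMatrix Pr X X)) *
          √((lamMin Q)⁻¹ ^ 2 * (trace Q * qOpNorm Q Q (covMatrix Pr Y Y))) := by
        refine qOpNorm_le P (by positivity) fun x hx => ?_
        refine (qNorm_covMatrix_mulVec_le hP.posSemidef hX hY x).trans ?_
        gcongr
        · exact integral_quadForm_le_trace_mul_qOpNorm hX hP
        · exact (integral_sq_dotProduct_le hn hQ hY hx).trans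
            (by gcongr; exact integral_quadForm_le_trace_mul_qOpNorm hY hQ)
    _ = _ := by
        rw [Real.sqrt_mul hP.posSemidef.trace_nonneg, Real.sqrt_mul (sq_nonneg _),
          Real.sqrt_sq hlam, Real.sqrt_mul hQ.posSemidef.trace_nonneg]
        ring

/-- **Weighted cross-covariance inequality (Appendix Lemma, key inequality).** -/
theorem weighted_cross_covariance_inequality
    (m n : ℕ) (hm : 0 < m) (hn : 0 < n)
    (P : Matrix (Fin m) (Fin m) ℝ) (Q : Matrix (Fin n) (Fin n) ℝ)
    (hP : P.PosDef) (hQ : Q.PosDef)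
    {Ω : Type} [MeasurableSpace Ω] (Pr : Measure Ω) [IsProbabilityMeasure Pr]
    (X : Ω → EuclideanSpace ℝ (Fin m)) (Y : Ω → EuclideanSpace ℝ (Fin n))
    (hX : MemLp X 2 Pr) (hY : MemLp Y 2 Pr) :
    qOpNorm P Q (covMatrix Pr X Y) ≤
      (lamMin Q)⁻¹ * Real.sqrt (Matrix.trace Q) * Real.sqrt (Matrix.trace P) *
        Real.sqrt (qOpNorm P P (covMatrix Pr X X)) *
        Real.sqrt (qOpNorm Q Q (covMatrix Pr Y Y)) :=
  weighted_cross_covariance_inequality_general m n hn P Q hP hQ Pr X Y hX hY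
end
end
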